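/- arXiv:1409.8585 — 2 statements merged into one kernel-verified Lean document; each statement's English description precedes it below -/
import Mathlib

section
/- Consider the SPS construction: measurements Y_i = φ_i^T p̊ + W_i, i = 1,...,N, with W_i independent and each symmetric about 0, regressors φ_i ∈ R^{n_p} known. Let A_{j,i}, j=1,...,m-1, i=1,...,N, be i.i.d. random signs independent of the noise. Define Z_0(p̊) = ||Σ_i φ_i W_i||² and Z_j(p̊) = ||Σ_i A_{j,i} φ_i W_i||² for j=1,...,m-1. Then (with uniform random tie-breaking) each Z_j(p̊), j=0,...,m-1, occupies any given rank among the m values with probability 1/m; consequently P(p̊ ∈ Σ_q) = 1 - q/m, where Σ_q is the set of p for which Z_0(p) is not among the q largest of the Z_j(p). -/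
open MeasureTheory ProbabilityTheory
open scoped ENNReal

/-- A random sign: a ±1-valued random variable taking each value with probability 1/2. -/
def IsRandSign {Ω : Type*} [MeasurableSpace Ω] (P : Measure Ω) (X : Ω → ℝ) : Prop :=
  Measurable X ∧ P {ω | X ω = 1} = 1/2 ∧ P {ω | X ω = -1} = 1/2

/-- The SPS statistics at a parameter `p`: `spsZ … 0` is the squared norm of the
unperturbed sum `Σ_i (Y_i - ⟪φ_i, p⟫) φ_i`, and `spsZ … j.succ` is the squared norm of
the `j`-th sign-perturbed sum `Σ_i A_{j,i} (Y_i - ⟪φ_i, p⟫) φ_i`. Here the paper's `m`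
is `mm + 1` (one unperturbed and `mm` perturbed sums). -/
noncomputable def spsZ {Ω : Type*} {N np mm : ℕ}
    (φ : Fin N → EuclideanSpace ℝ (Fin np)) (Y : Fin N → Ω → ℝ)
    (A : Fin mm → Fin N → Ω → ℝ) (p : EuclideanSpace ℝ (Fin np)) :
    Fin (mm + 1) → Ω → ℝ :=
  fun j => Fin.cases (motive := fun _ => Ω → ℝ)
    (fun ω => ‖∑ i, (Y i ω - (inner ℝ (φ i) p : ℝ)) • φ i‖ ^ 2)
    (fun j' ω => ‖∑ i, (A j' i ω * (Y i ω - (inner ℝ (φ i) p : ℝ))) • φ i‖ ^ 2) j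

/-!
Under the true parameter the residuals are the noises, so every statistic is a function of the
noise vector `W`, the sign table `A` and the tie-breakers `U`. Given `A = a`, multiplying the noise
by the `k`-th sign row (harmless, by symmetry), multiplying the other rows by that row and swapping
`U 0` with `U (k+1)` turns the `0`-th statistic into the `(k+1)`-th one; since it permutes the
equally likely sign tables, `Z 0` and `Z (k+1)` have the same rank distribution. The atomless
independent tie-breakers make the `m` ranks a permutation almost surely, so each rank has
probability `1/m`, and `p̊ ∈ Σ_q` means that the rank of `Z 0` is below `m - q`.
-/

section Rank

variable {ι β : Type*}

noncomputable def rank [LT β] (s : ι → β) (j : ι) : ℕ := {l | s l < s j}.ncard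

variable [LinearOrder β]

theorem rank_comp_perm (s : ι → β) (σ : Equiv.Perm ι) (j : ι) :
    rank (s ∘ σ) j = rank s (σ j) :=
  Set.ncard_preimage_of_injective_subset_range (s := {l | s l < s (σ j)}) σ.injective
    (by simp [σ.range_eq_univ])

theorem rank_eq_card_filter [Fintype ι] (s : ι → β) (j : ι) :
    rank s j = (Finset.univ.filter fun l => s l < s j).card := by
  rw [rank, Set.ncard_eq_toFinset_card']
  congr 1
  ext l
  simp

theorem rank_lt_card [Fintype ι] (s : ι → β) (j : ι) : rank s j < Fintype.card ι := by
  rw [rank_eq_card_filter]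
  exact Finset.card_lt_univ_of_notMem (x := j) (by simp)

theorem rank_strictMono [Finite ι] {s : ι → β} {j j' : ι} (h : s j < s j') :
    rank s j < rank s j' := by
  have := Fintype.ofFinite ι
  simp only [rank_eq_card_filter]
  refine Finset.card_lt_card
    (Finset.ssubset_iff_of_subset ?_ |>.2 ⟨j, by simpa using h, by simp⟩)
  intro l hl
  simp only [Finset.mem_filter, Finset.mem_univ, true_and] at hl ⊢
  exact hl.trans h

theorem rank_injective [Finite ι] {s : ι → β} (hs : Function.Injective s) :
    Function.Injective (rank s) := by
  intro j j' h
  rcases lt_trichotomy (s j) (s j') with hlt | heq | hgt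
  · exact absurd h (rank_strictMono hlt).ne
  · exact hs heq
  · exact absurd h (rank_strictMono hgt).ne'

theorem existsUnique_rank_eq [Fintype ι] {s : ι → β} (hs : Function.Injective s) {r : ℕ}
    (hr : r < Fintype.card ι) : ∃! j, rank s j = r := by
  let f : ι → Fin (Fintype.card ι) := fun j => ⟨rank s j, rank_lt_card s j⟩
  have hf : Function.Bijective f :=
    (Fintype.bijective_iff_injective_and_card f).2
      ⟨fun j j' h => rank_injective hs (Fin.val_eq_of_eq h), by simp⟩
  obtain ⟨j, hj⟩ := hf.2 ⟨r, hr⟩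
  exact ⟨j, congrArg Fin.val hj,
    fun j' hj' => hf.1 (Fin.ext (hj'.trans (congrArg Fin.val hj).symm))⟩

theorem rank_zero_add_ncard_gt {n : ℕ} {s : Fin (n + 1) → β} (hs : Function.Injective s) :
    rank s 0 + {j : Fin n | s 0 < s j.succ}.ncard = n := by
  have hrank : rank s 0 = (Finset.univ.filter fun j : Fin n => s j.succ < s 0).card := by
    rw [rank_eq_card_filter, Fin.card_filter_univ_succ, if_neg (lt_irrefl _)]
  have hgt : {j : Fin n | s 0 < s j.succ}.ncard
      = (Finset.univ.filter fun j : Fin n => ¬ s j.succ < s 0).card := by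
    rw [Set.ncard_eq_toFinset_card']
    congr 1
    ext j
    simp only [Set.mem_toFinset, Set.mem_ofPred_eq, Finset.mem_filter, Finset.mem_univ,
      true_and, not_lt]
    exact ⟨le_of_lt, fun h => h.lt_of_ne fun he => Fin.succ_ne_zero j (hs he.symm)⟩
  rw [hrank, hgt, Finset.card_filter_add_card_filter_not, Finset.card_univ, Fintype.card_fin]

end Rank

section RandomRank

variable {Ω ι β : Type*} [MeasurableSpace Ω] [Fintype ι] [LinearOrder β]

theorem measurableSet_rank_eq {α : Type*} [MeasurableSpace α] {s : α → ι → β}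
    (hs : ∀ l j, MeasurableSet {x | s x l < s x j}) (j : ι) (r : ℕ) :
    MeasurableSet {x | rank (s x) j = r} := by
  classical
  have : Measurable fun x => ∑ l, if s x l < s x j then 1 else 0 :=
    Finset.measurable_sum _ fun l _ => Measurable.ite (hs l j) measurable_const measurable_const
  convert this (measurableSet_singleton r) using 1
  ext x
  rw [Set.mem_ofPred_eq, rank_eq_card_filter, Finset.card_filter]
  rfl

variable {P : Measure Ω} [IsProbabilityMeasure P] {S : Ω → ι → β}

theorem sum_measure_rank_eq_eq_one (hinj : ∀ᵐ ω ∂P, Function.Injective (S ω))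
    (hmeas : ∀ j r, MeasurableSet {ω | rank (S ω) j = r}) {r : ℕ} (hr : r < Fintype.card ι) :
    ∑ j, P {ω | rank (S ω) j = r} = 1 := by
  have hone : ∀ᵐ ω ∂P,
      ∑ j, {ω | rank (S ω) j = r}.indicator 1 ω = (1 : ℝ≥0∞) := by
    filter_upwards [hinj] with ω hω
    obtain ⟨j₀, hj₀, huniq⟩ := existsUnique_rank_eq hω hr
    rw [Finset.sum_eq_single j₀ (fun j _ hj => by simpa using fun h => hj (huniq j h))
      (by simp)]
    simp [hj₀]
  calc ∑ j, P {ω | rank (S ω) j = r}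
      = ∫⁻ ω, ∑ j, {ω | rank (S ω) j = r}.indicator 1 ω ∂P := by
        rw [lintegral_finsetSum _ fun j _ => measurable_one.indicator (hmeas j r)]
        simp_rw [lintegral_indicator_one (hmeas _ r)]
    _ = 1 := by rw [lintegral_congr_ae hone, lintegral_one, measure_univ]

theorem measure_rank_eq_inv_card (hinj : ∀ᵐ ω ∂P, Function.Injective (S ω))
    (hmeas : ∀ j r, MeasurableSet {ω | rank (S ω) j = r})
    (hexch : ∀ j j' r, P {ω | rank (S ω) j = r} = P {ω | rank (S ω) j' = r})
    (j : ι) {r : ℕ} (hr : r < Fintype.card ι) :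
    P {ω | rank (S ω) j = r} = (Fintype.card ι : ℝ≥0∞)⁻¹ := by
  refine ENNReal.eq_inv_of_mul_eq_one_left ?_
  rw [mul_comm, ← nsmul_eq_mul, ← Finset.card_univ, ← Finset.sum_const,
    ← sum_measure_rank_eq_eq_one hinj hmeas hr]
  exact Finset.sum_congr rfl fun j' _ => hexch j j' r

theorem measure_rank_lt (hinj : ∀ᵐ ω ∂P, Function.Injective (S ω))
    (hmeas : ∀ j r, MeasurableSet {ω | rank (S ω) j = r})
    (hexch : ∀ j j' r, P {ω | rank (S ω) j = r} = P {ω | rank (S ω) j' = r})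
    (j : ι) {t : ℕ} (ht : t ≤ Fintype.card ι) :
    P {ω | rank (S ω) j < t} = t / Fintype.card ι := by
  have hunion : {ω | rank (S ω) j < t} = ⋃ r ∈ Finset.range t, {ω | rank (S ω) j = r} := by
    ext ω; simp
  rw [hunion, measure_biUnion_finset (fun r _ r' _ h => Set.disjoint_left.2 fun ω h₁ h₂ =>
      h (h₁.symm.trans h₂)) fun r _ => hmeas j r,
    Finset.sum_congr rfl fun r hr =>
      measure_rank_eq_inv_card hinj hmeas hexch j ((Finset.mem_range.1 hr).trans_le ht)]
  simp [div_eq_mul_inv]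

end RandomRank

theorem measure_le_ncard_zero_lt_succ {Ω β : Type*} [MeasurableSpace Ω] [LinearOrder β]
    {P : Measure Ω} [IsProbabilityMeasure P] {n : ℕ} {S : Ω → Fin (n + 1) → β}
    (hinj : ∀ᵐ ω ∂P, Function.Injective (S ω))
    (hmeas : ∀ j r, MeasurableSet {ω | rank (S ω) j = r})
    (hexch : ∀ j j' r, P {ω | rank (S ω) j = r} = P {ω | rank (S ω) j' = r})
    {q : ℕ} (hq : q ≤ n) :
    P {ω | q ≤ {j : Fin n | S ω 0 < S ω j.succ}.ncard} = 1 - q / (n + 1 : ℕ) := by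
  have hae : {ω | q ≤ {j : Fin n | S ω 0 < S ω j.succ}.ncard}
      =ᵐ[P] {ω | rank (S ω) 0 < n + 1 - q} := by
    filter_upwards [hinj] with ω hω
    have := rank_zero_add_ncard_gt hω
    change (q ≤ _) = (_ < _)
    exact propext (by omega)
  rw [measure_congr hae, measure_rank_lt hinj hmeas hexch 0 (by simp), Fintype.card_fin,
    ENNReal.natCast_sub, ENNReal.sub_div (fun _ _ => by simp), ENNReal.div_self (by simp) (by simp)]

section Probability

variable {Ω : Type*} [MeasurableSpace Ω] {P : Measure Ω}

theorem measurableSet_toLex_lt {α : Type*} [MeasurableSpace α] {f g f' g' : α → ℝ}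
    (hf : Measurable f) (hg : Measurable g) (hf' : Measurable f') (hg' : Measurable g') :
    MeasurableSet {x | toLex (f x, g x) < toLex (f' x, g' x)} := by
  simp only [Prod.Lex.toLex_lt_toLex, Set.ofPred_or, Set.ofPred_and]
  exact (measurableSet_lt hf hf').union
    ((measurableSet_eq_fun hf hf').inter (measurableSet_lt hg hg'))

theorem ProbabilityTheory.iIndepFun.indepFun_restrict_of_disjoint {ι κ κ' β : Type*}
    [MeasurableSpace β] [Fintype κ] [Fintype κ'] {f : ι → Ω → β} (h : iIndepFun f P)
    (hf : ∀ i, Measurable (f i))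
    {g : κ → ι} {g' : κ' → ι} (hgg' : ∀ a b, g a ≠ g' b) :
    IndepFun (fun ω a => f (g a) ω) (fun ω b => f (g' b) ω) P := by
  classical
  have hdisj : Disjoint (Finset.univ.image g) (Finset.univ.image g') := by
    simp only [Finset.disjoint_left, Finset.mem_image, Finset.mem_univ, true_and]
    rintro _ ⟨a, rfl⟩ ⟨b, hb⟩
    exact hgg' a b hb.symm
  exact (h.indepFun_finset _ _ hdisj hf).comp
    (φ := fun y a => y ⟨g a, by simp⟩) (ψ := fun y b => y ⟨g' b, by simp⟩)
    (measurable_pi_lambda _ fun _ => measurable_pi_apply _)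
    (measurable_pi_lambda _ fun _ => measurable_pi_apply _)

theorem MeasureTheory.Measure.map_pi_comp_perm {ι α : Type*} [Fintype ι] [MeasurableSpace α]
    (ν ν' : ι → Measure α) [∀ i, IsFiniteMeasure (ν i)] [∀ i, SigmaFinite (ν' i)]
    (σ : Equiv.Perm ι) {g : ι → α → α} (hg : ∀ i, Measurable (g i))
    (h : ∀ i, (ν (σ i)).map (g i) = ν' i) :
    (Measure.pi ν).map (fun x i => g i (x (σ i))) = Measure.pi ν' := by
  have hperm : (Measure.pi ν).map (fun x i => x (σ i)) = Measure.pi fun i => ν (σ i) := by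
    convert Measure.pi_map_piCongrLeft σ.symm (fun i => ν (σ i)) using 2
    · ext x i
      simp [MeasurableEquiv.coe_piCongrLeft, Equiv.piCongrLeft_apply]
    · simp
  have hcomp := Measure.map_map (μ := Measure.pi ν) (g := fun y i => g i (y i))
    (measurable_pi_lambda _ fun i => (hg i).comp (measurable_pi_apply i) :)
    (measurable_pi_lambda _ fun i => measurable_pi_apply (σ i))
  rw [Function.comp_def] at hcomp
  rw [← hcomp, hperm, Measure.pi_map_pi fun i => (hg i).aemeasurable]
  simp only [h]

theorem measure_preimage_eq_sum_of_indepFun [IsProbabilityMeasure P] {X Y : Type*}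
    [MeasurableSpace X] [MeasurableSpace Y] [MeasurableSingletonClass Y]
    {ξ : Ω → X} {η : Ω → Y}
    (hξ : Measurable ξ) (hη : Measurable η) (hind : IndepFun ξ η P) {s : Finset Y}
    (hs : ∀ᵐ ω ∂P, η ω ∈ s) {G : Set (X × Y)} (hG : MeasurableSet G) :
    P ((fun ω => (ξ ω, η ω)) ⁻¹' G)
      = ∑ y ∈ s, P.map ξ ((fun x => (x, y)) ⁻¹' G) * P.map η {y} := by
  have hs' : (P.map η).restrict s = P.map η :=
    Measure.restrict_eq_self_of_ae_mem ((ae_map_iff hη.aemeasurable s.measurableSet).2 hs)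
  rw [← Measure.map_apply (hξ.prodMk hη) hG,
    (indepFun_iff_map_prod_eq_prod_map_map hξ.aemeasurable hη.aemeasurable).1 hind,
    Measure.prod_apply_symm hG, ← hs', lintegral_finset, hs']

theorem measure_eq_eq_zero_of_indepFun [IsProbabilityMeasure P] {X Y : Ω → ℝ}
    (hX : Measurable X) (hY : Measurable Y) (hind : IndepFun X Y P)
    (hatom : ∀ x, P {ω | Y ω = x} = 0) : P {ω | X ω = Y ω} = 0 := by
  have hdiag : MeasurableSet {z : ℝ × ℝ | z.1 = z.2} :=
    measurableSet_eq_fun measurable_fst measurable_snd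
  have hsection : ∀ x, P.map Y (Prod.mk x ⁻¹' {z : ℝ × ℝ | z.1 = z.2}) = 0 := fun x => by
    have hx : Prod.mk x ⁻¹' {z : ℝ × ℝ | z.1 = z.2} = {x} := by ext; simp [eq_comm]
    rw [hx, Measure.map_apply hY (measurableSet_singleton x)]
    exact hatom x
  change P ((fun ω => (X ω, Y ω)) ⁻¹' {z | z.1 = z.2}) = 0
  rw [← Measure.map_apply (hX.prodMk hY) hdiag,
    (indepFun_iff_map_prod_eq_prod_map_map hX.aemeasurable hY.aemeasurable).1 hind,
    Measure.prod_apply hdiag]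
  simp only [hsection, lintegral_zero]

theorem ae_injective_of_indepFun [IsProbabilityMeasure P] {ι : Type*} [Countable ι]
    {U : ι → Ω → ℝ} (hU : ∀ i, Measurable (U i))
    (hind : Pairwise fun i j => IndepFun (U i) (U j) P)
    (hatom : ∀ i x, P {ω | U i ω = x} = 0) :
    ∀ᵐ ω ∂P, Function.Injective fun i => U i ω := by
  simp only [Function.Injective, ae_all_iff]
  intro i j
  rcases eq_or_ne i j with rfl | hij
  · exact Filter.Eventually.of_forall fun _ _ => rfl
  · rw [ae_iff]
    simpa [hij] using measure_eq_eq_zero_of_indepFun (hU i) (hU j) (hind hij) (hatom j)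

noncomputable def signVectors (κ : Type*) [Fintype κ] [DecidableEq κ] : Finset (κ → ℝ) :=
  Fintype.piFinset fun _ => {1, -1}

theorem mul_self_of_mem_signVectors {κ : Type*} [Fintype κ] [DecidableEq κ] {a : κ → ℝ}
    (ha : a ∈ signVectors κ) (t : κ) : a t * a t = 1 := by
  have := Fintype.mem_piFinset.1 ha t
  simp only [Finset.mem_insert, Finset.mem_singleton] at this
  rcases this with h | h <;> simp [h]

theorem IsRandSign.measure_preimage_singleton {X : Ω → ℝ} (h : IsRandSign P X) {x : ℝ}
    (hx : x ∈ ({1, -1} : Finset ℝ)) : P (X ⁻¹' {x}) = 2⁻¹ := by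
  rcases Finset.mem_insert.1 hx with rfl | hx
  · rw [← one_div]
    exact h.2.1
  · rw [Finset.mem_singleton.1 hx, ← one_div]
    exact h.2.2

theorem IsRandSign.ae_mem [IsProbabilityMeasure P] {X : Ω → ℝ} (h : IsRandSign P X) :
    ∀ᵐ ω ∂P, X ω ∈ ({1, -1} : Finset ℝ) := by
  have hmeas : MeasurableSet (X ⁻¹' {1, -1}) := h.1 ((measurableSet_singleton _).insert _)
  have hsplit : P (X ⁻¹' {1, -1}) = 1 := by
    rw [Set.insert_eq, Set.preimage_union, measure_union
      ((Set.disjoint_singleton.2 (by norm_num)).preimage X) (h.1 (measurableSet_singleton _)),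
      h.measure_preimage_singleton (by simp), h.measure_preimage_singleton (by simp),
      ENNReal.inv_two_add_inv_two]
  have hcompl : {ω | X ω ∉ ({1, -1} : Finset ℝ)} = (X ⁻¹' {1, -1})ᶜ := by ext; simp
  rw [ae_iff, hcompl, measure_compl hmeas (measure_ne_top _ _), hsplit, measure_univ, tsub_self]

theorem measure_map_randSigns {κ : Type*} [Fintype κ] [DecidableEq κ] [IsProbabilityMeasure P]
    {A : κ → Ω → ℝ} (hA : ∀ t, IsRandSign P (A t)) (hind : iIndepFun A P) {a : κ → ℝ}
    (ha : a ∈ signVectors κ) :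
    P.map (fun ω t => A t ω) {a} = 2⁻¹ ^ Fintype.card κ := by
  classical
  have hpre : (fun ω t => A t ω) ⁻¹' {a} = ⋂ t ∈ Finset.univ, A t ⁻¹' {a t} := by
    ext ω; simp [funext_iff]
  rw [Measure.map_apply (measurable_pi_lambda _ fun t => (hA t).1) (measurableSet_singleton a),
    hpre, hind.measure_inter_preimage_eq_mul _ fun _ _ => measurableSet_singleton _,
    Finset.prod_congr rfl fun t _ =>
      (hA t).measure_preimage_singleton (Fintype.mem_piFinset.1 ha t)]
  simp

theorem ae_mem_randSigns {κ : Type*} [Fintype κ] [DecidableEq κ] [IsProbabilityMeasure P]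
    {A : κ → Ω → ℝ} (hA : ∀ t, IsRandSign P (A t)) :
    ∀ᵐ ω ∂P, (fun t => A t ω) ∈ signVectors κ := by
  simpa [signVectors, Fintype.mem_piFinset] using ae_all_iff.2 fun t => (hA t).ae_mem

end Probability

section SPS

variable {N np mm : ℕ} (φ : Fin N → EuclideanSpace ℝ (Fin np))

noncomputable def spsStat (a : Fin mm × Fin N → ℝ) (w : Fin N → ℝ) :
    Fin (mm + 1) → ℝ :=
  Fin.cons (‖∑ i, w i • φ i‖ ^ 2) fun k => ‖∑ i, (a (k, i) * w i) • φ i‖ ^ 2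

/-- `x` packs the noise (`inl`) and the tie-breakers (`inr`); the lexicographic order on the keys
is the order of the statistics with ties broken by the tie-breakers. -/
noncomputable def spsKey (a : Fin mm × Fin N → ℝ) (x : Fin N ⊕ Fin (mm + 1) → ℝ) :
    Fin (mm + 1) → ℝ ×ₗ ℝ :=
  fun l => toLex (spsStat φ a (fun i => x (.inl i)) l, x (.inr l))

/-- Multiplying the noise by the `k`-th sign row exchanges the unperturbed sum with the `k`-th
perturbed one; multiplying the other rows by the same row leaves their sums unchanged. -/
def spsSignSwap (k : Fin mm) (a : Fin mm × Fin N → ℝ) : Fin mm × Fin N → ℝ :=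
  fun t => if t.1 = k then a t else a t * a (k, t.2)

def spsFlip (k : Fin mm) (a : Fin mm × Fin N → ℝ) (x : Fin N ⊕ Fin (mm + 1) → ℝ) :
    Fin N ⊕ Fin (mm + 1) → ℝ :=
  fun s => Sum.elim (fun i v => a (k, i) * v) (fun _ v => v) s
    (x (Equiv.sumCongr (Equiv.refl _) (Equiv.swap 0 k.succ) s))

variable {φ}

theorem spsZ_eq_spsStat {Ω : Type*} {p₀ : EuclideanSpace ℝ (Fin np)}
    {W Y : Fin N → Ω → ℝ} {A : Fin mm → Fin N → Ω → ℝ}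
    (hY : ∀ i ω, Y i ω = (inner ℝ (φ i) p₀ : ℝ) + W i ω) (l : Fin (mm + 1)) (ω : Ω) :
    spsZ φ Y A p₀ l ω = spsStat φ (fun t => A t.1 t.2 ω) (fun i => W i ω) l := by
  cases l using Fin.cases <;> simp [spsZ, spsStat, hY]

theorem spsSignSwap_mem {k : Fin mm} {a : Fin mm × Fin N → ℝ} (ha : a ∈ signVectors _) :
    spsSignSwap k a ∈ signVectors _ := by
  refine Fintype.mem_piFinset.2 fun t => ?_
  have hmem := Fintype.mem_piFinset.1 ha
  unfold spsSignSwap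
  split_ifs
  · exact hmem t
  · have h1 := hmem t
    have h2 := hmem (k, t.2)
    simp only [Finset.mem_insert, Finset.mem_singleton] at h1 h2 ⊢
    rcases h1 with h1 | h1 <;> rcases h2 with h2 | h2 <;> simp [h1, h2]

theorem spsSignSwap_spsSignSwap {k : Fin mm} {a : Fin mm × Fin N → ℝ}
    (ha : a ∈ signVectors _) : spsSignSwap k (spsSignSwap k a) = a := by
  funext t
  by_cases h : t.1 = k
  · simp [spsSignSwap, h]
  · simp [spsSignSwap, h, mul_assoc, mul_self_of_mem_signVectors ha]

theorem spsStat_spsSignSwap {k : Fin mm} {a : Fin mm × Fin N → ℝ} (ha : a ∈ signVectors _)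
    (w : Fin N → ℝ) :
    spsStat φ (spsSignSwap k a) (fun i => a (k, i) * w i)
      = spsStat φ a w ∘ Equiv.swap 0 k.succ := by
  have hsq : ∀ i, a (k, i) * (a (k, i) * w i) = w i := fun i => by
    rw [← mul_assoc, mul_self_of_mem_signVectors ha, one_mul]
  funext l
  induction l using Fin.cases with
  | zero => simp [spsStat]
  | succ l =>
    rcases eq_or_ne l k with rfl | hl
    · simp [spsStat, spsSignSwap, ← mul_assoc, mul_self_of_mem_signVectors ha]
    · rw [Function.comp_apply, Equiv.swap_apply_of_ne_of_ne (Fin.succ_ne_zero l)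
        (fun h => hl (Fin.succ_injective _ h))]
      simp [spsStat, spsSignSwap, hl, mul_assoc, hsq]

theorem spsKey_spsFlip {k : Fin mm} {a : Fin mm × Fin N → ℝ} (ha : a ∈ signVectors _)
    (x : Fin N ⊕ Fin (mm + 1) → ℝ) :
    spsKey φ (spsSignSwap k a) (spsFlip k a x) = spsKey φ a x ∘ Equiv.swap 0 k.succ := by
  funext l
  have := congrFun (spsStat_spsSignSwap (φ := φ) (k := k) ha fun i => x (.inl i)) l
  simp only [spsKey, spsFlip, Function.comp_apply, Equiv.sumCongr_apply, Sum.map_inl,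
    Sum.map_inr, Sum.elim_inl, Sum.elim_inr, Equiv.refl_apply] at this ⊢
  rw [this]

theorem measurable_spsStat (l : Fin (mm + 1)) :
    Measurable fun z : (Fin N ⊕ Fin (mm + 1) → ℝ) × (Fin mm × Fin N → ℝ) =>
      spsStat φ z.2 (fun i => z.1 (.inl i)) l := by
  apply Continuous.measurable
  cases l using Fin.cases <;> simp only [spsStat, Fin.cons_zero, Fin.cons_succ] <;> fun_prop

theorem measurableSet_rank_spsKey (j : Fin (mm + 1)) (r : ℕ) :
    MeasurableSet {z : (Fin N ⊕ Fin (mm + 1) → ℝ) × (Fin mm × Fin N → ℝ) |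
      rank (spsKey φ z.2 z.1) j = r} :=
  measurableSet_rank_eq (fun l j => measurableSet_toLex_lt (measurable_spsStat l)
    (by fun_prop) (measurable_spsStat j) (by fun_prop)) j r

theorem measure_pi_rank_spsKey_spsSignSwap {ν : Fin N ⊕ Fin (mm + 1) → Measure ℝ}
    [∀ s, IsProbabilityMeasure (ν s)]
    (hsym : ∀ i, (ν (.inl i)).map Neg.neg = ν (.inl i))
    (hU : ∀ l l', ν (.inr l) = ν (.inr l'))
    {k : Fin mm} {a : Fin mm × Fin N → ℝ} (ha : a ∈ signVectors _) (r : ℕ) :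
    Measure.pi ν {x | rank (spsKey φ (spsSignSwap k a) x) k.succ = r}
      = Measure.pi ν {x | rank (spsKey φ a x) 0 = r} := by
  have hg : ∀ s : Fin N ⊕ Fin (mm + 1),
      Measurable (Sum.elim (fun i v => a (k, i) * v) (fun _ v => v) s : ℝ → ℝ) := by
    rintro (i | l)
    exacts [measurable_const_mul _, measurable_id]
  have hmap : (Measure.pi ν).map (spsFlip k a) = Measure.pi ν := by
    refine Measure.map_pi_comp_perm ν ν _ hg ?_
    rintro (i | l)
    · change (ν (.inl i)).map (a (k, i) * ·) = ν (.inl i)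
      rcases Finset.mem_insert.1 (Fintype.mem_piFinset.1 ha (k, i)) with h | h
      · simp only [h, one_mul]
        exact Measure.map_id'
      · simp only [Finset.mem_singleton.1 h, neg_one_mul]
        exact hsym i
    · change (ν (.inr (Equiv.swap 0 k.succ l))).map (fun v => v) = ν (.inr l)
      rw [Measure.map_id']
      exact hU _ l
  have hpre : spsFlip k a ⁻¹' {x | rank (spsKey φ (spsSignSwap k a) x) k.succ = r}
      = {x | rank (spsKey φ a x) 0 = r} := by
    ext x
    simp [spsKey_spsFlip ha, rank_comp_perm]
  have hflip : Measurable (spsFlip (N := N) k a) :=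
    measurable_pi_lambda _ fun s => (hg s).comp (measurable_pi_apply _)
  have hmeas : MeasurableSet {x | rank (spsKey φ (spsSignSwap k a) x) k.succ = r} :=
    measurable_prodMk_right (measurableSet_rank_spsKey k.succ r)
  rw [← hpre, ← Measure.map_apply hflip hmeas, hmap]

theorem measure_rank_spsKey_succ_eq_zero {Ω : Type*} [MeasurableSpace Ω] {P : Measure Ω}
    [IsProbabilityMeasure P] {ξ : Ω → Fin N ⊕ Fin (mm + 1) → ℝ}
    {η : Ω → Fin mm × Fin N → ℝ}
    (hξ : Measurable ξ) (hη : Measurable η) (hind : IndepFun ξ η P)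
    {ν : Fin N ⊕ Fin (mm + 1) → Measure ℝ} [∀ s, IsProbabilityMeasure (ν s)]
    (hlaw : P.map ξ = Measure.pi ν)
    (hsym : ∀ i, (ν (.inl i)).map Neg.neg = ν (.inl i))
    (hU : ∀ l l', ν (.inr l) = ν (.inr l'))
    (hsigns : ∀ᵐ ω ∂P, η ω ∈ signVectors _)
    (hunif : ∀ a ∈ signVectors _, ∀ b ∈ signVectors _, P.map η {a} = P.map η {b})
    (k : Fin mm) (r : ℕ) :
    P {ω | rank (spsKey φ (η ω) (ξ ω)) k.succ = r}
      = P {ω | rank (spsKey φ (η ω) (ξ ω)) 0 = r} := by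
  change P ((fun ω => (ξ ω, η ω)) ⁻¹' {z | rank (spsKey φ z.2 z.1) k.succ = r})
    = P ((fun ω => (ξ ω, η ω)) ⁻¹' {z | rank (spsKey φ z.2 z.1) 0 = r})
  rw [measure_preimage_eq_sum_of_indepFun hξ hη hind hsigns (measurableSet_rank_spsKey _ r),
    measure_preimage_eq_sum_of_indepFun hξ hη hind hsigns (measurableSet_rank_spsKey _ r)]
  symm
  refine Finset.sum_nbij' (spsSignSwap k) (spsSignSwap k) (fun _ ha => spsSignSwap_mem ha)
    (fun _ ha => spsSignSwap_mem ha) (fun _ ha => spsSignSwap_spsSignSwap ha)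
    (fun _ ha => spsSignSwap_spsSignSwap ha) fun a ha => ?_
  rw [hlaw, hunif a ha _ (spsSignSwap_mem ha)]
  exact congrArg (· * _) (measure_pi_rank_spsKey_spsSignSwap hsym hU ha r).symm

end SPS

section SPSModel

variable {Ω : Type*} [MeasurableSpace Ω] {P : Measure Ω} {N np mm : ℕ}
  {W : Fin N → Ω → ℝ} {A : Fin mm → Fin N → Ω → ℝ} {U : Fin (mm + 1) → Ω → ℝ}

theorem measurable_sumElim_pi (hW : ∀ i, Measurable (W i)) (hU : ∀ l, Measurable (U l)) :
    Measurable fun ω s => Sum.elim W U s ω :=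
  measurable_pi_lambda _ fun s => s.rec hW hU

theorem sps_iIndepFun_noise
    (hindep : iIndepFun (Sum.elim W (Sum.elim (fun t : Fin mm × Fin N => A t.1 t.2) U)) P) :
    iIndepFun (Sum.elim W U) P := by
  convert hindep.precomp
    (Sum.map_injective.2 ⟨Function.injective_id, Sum.inr_injective⟩) using 1
  funext s
  cases s <;> rfl

theorem sps_indepFun_noise_signs (hW : ∀ i, Measurable (W i))
    (hA : ∀ k i, Measurable (A k i)) (hU : ∀ l, Measurable (U l))
    (hindep : iIndepFun (Sum.elim W (Sum.elim (fun t : Fin mm × Fin N => A t.1 t.2) U)) P) :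
    IndepFun (fun ω s => Sum.elim W U s ω) (fun ω (t : Fin mm × Fin N) => A t.1 t.2 ω) P := by
  have h := hindep.indepFun_restrict_of_disjoint
    (by rintro (i | t | l); exacts [hW i, hA t.1 t.2, hU l])
    (g := Sum.map id Sum.inr) (g' := fun t : Fin mm × Fin N => Sum.inr (Sum.inl t))
    (by rintro (i | l) t <;> simp)
  convert h using 1
  · funext ω s
    cases s <;> rfl
  · rfl

theorem sps_measurableSet_rank (φ : Fin N → EuclideanSpace ℝ (Fin np))
    (hW : ∀ i, Measurable (W i)) (hA : ∀ k i, Measurable (A k i)) (hU : ∀ l, Measurable (U l))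
    (j : Fin (mm + 1)) (r : ℕ) :
    MeasurableSet
      {ω | rank (spsKey φ (fun t => A t.1 t.2 ω) fun s => Sum.elim W U s ω) j = r} := by
  have h := (measurableSet_rank_spsKey (φ := φ) j r).preimage
    ((measurable_sumElim_pi hW hU).prodMk (measurable_pi_lambda _ fun t => hA t.1 t.2))
  exact h

theorem sps_rank_exchangeable [IsProbabilityMeasure P] (φ : Fin N → EuclideanSpace ℝ (Fin np))
    (hWmeas : ∀ i, Measurable (W i))
    (hWsym : ∀ i, Measure.map (W i) P = Measure.map (fun ω => -W i ω) P)
    (hA : ∀ k i, IsRandSign P (A k i)) (hUmeas : ∀ l, Measurable (U l))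
    (hUid : ∀ l l', IdentDistrib (U l) (U l') P P)
    (hindep : iIndepFun (Sum.elim W (Sum.elim (fun t : Fin mm × Fin N => A t.1 t.2) U)) P)
    (j : Fin (mm + 1)) (r : ℕ) :
    P {ω | rank (spsKey φ (fun t => A t.1 t.2 ω) fun s => Sum.elim W U s ω) j = r}
      = P {ω | rank (spsKey φ (fun t => A t.1 t.2 ω) fun s => Sum.elim W U s ω) 0 = r} := by
  have hF : ∀ s, Measurable (Sum.elim W U s) := fun s => s.rec hWmeas hUmeas
  have hsignInd : iIndepFun (fun t : Fin mm × Fin N => A t.1 t.2) P :=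
    hindep.precomp (Sum.inr_injective.comp Sum.inl_injective)
  have hlaw := (iIndepFun_iff_map_fun_eq_pi_map fun s => (hF s).aemeasurable).1
    (sps_iIndepFun_noise hindep)
  have : ∀ s, IsProbabilityMeasure (P.map (Sum.elim W U s)) :=
    fun s => Measure.isProbabilityMeasure_map (hF s).aemeasurable
  have hsym : ∀ i, (P.map (W i)).map Neg.neg = P.map (W i) := fun i => by
    rw [Measure.map_map measurable_neg (hWmeas i)]
    exact (hWsym i).symm
  induction j using Fin.cases with
  | zero => rfl
  | succ k =>
    exact measure_rank_spsKey_succ_eq_zero (measurable_sumElim_pi hWmeas hUmeas)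
      (measurable_pi_lambda _ fun t => (hA t.1 t.2).1)
      (sps_indepFun_noise_signs hWmeas (fun k i => (hA k i).1) hUmeas hindep) hlaw hsym
      (fun l l' => (hUid l l').map_eq) (ae_mem_randSigns fun t => hA t.1 t.2)
      (fun a ha b hb => (measure_map_randSigns (fun t => hA t.1 t.2) hsignInd ha).trans
        (measure_map_randSigns (fun t => hA t.1 t.2) hsignInd hb).symm) k r

end SPSModel

theorem sps_exact_confidence_general {Ω : Type*} [MeasurableSpace Ω] (P : Measure Ω)
    [IsProbabilityMeasure P] (N np mm q : ℕ) (hqm : q ≤ mm)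
    (φ : Fin N → EuclideanSpace ℝ (Fin np)) (p₀ : EuclideanSpace ℝ (Fin np))
    (W Y : Fin N → Ω → ℝ) (A : Fin mm → Fin N → Ω → ℝ) (U : Fin (mm + 1) → Ω → ℝ)
    (hWmeas : ∀ i, Measurable (W i))
    (hWsym : ∀ i, Measure.map (W i) P = Measure.map (fun ω => -W i ω) P)
    (hA : ∀ j i, IsRandSign P (A j i))
    (hUmeas : ∀ j, Measurable (U j))
    (hUid : ∀ j j', IdentDistrib (U j) (U j') P P)
    (hUcont : ∀ j, ∀ x : ℝ, P {ω | U j ω = x} = 0)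
    (hindep : iIndepFun
      (Sum.elim W (Sum.elim (fun p : Fin mm × Fin N => A p.1 p.2) U) :
        Fin N ⊕ ((Fin mm × Fin N) ⊕ Fin (mm + 1)) → Ω → ℝ) P)
    (hY : ∀ i ω, Y i ω = (inner ℝ (φ i) p₀ : ℝ) + W i ω) :
    (∀ j : Fin (mm + 1), ∀ r : ℕ, r < mm + 1 →
      P {ω | Set.ncard {l : Fin (mm + 1) |
          (toLex (spsZ φ Y A p₀ l ω, U l ω) : ℝ ×ₗ ℝ)
            < toLex (spsZ φ Y A p₀ j ω, U j ω)} = r}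
        = ((mm + 1 : ℕ) : ℝ≥0∞)⁻¹) ∧
    P {ω | q ≤ Set.ncard {j : Fin mm |
        (toLex (spsZ φ Y A p₀ 0 ω, U 0 ω) : ℝ ×ₗ ℝ)
          < toLex (spsZ φ Y A p₀ j.succ ω, U j.succ ω)}}
      = 1 - (q : ℝ≥0∞) / ((mm + 1 : ℕ) : ℝ≥0∞) := by
  set S : Ω → Fin (mm + 1) → ℝ ×ₗ ℝ :=
    fun ω => spsKey φ (fun t => A t.1 t.2 ω) fun s => Sum.elim W U s ω
  have hS : ∀ ω l, S ω l = toLex (spsZ φ Y A p₀ l ω, U l ω) :=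
    fun ω l => by simp [S, spsKey, spsZ_eq_spsStat hY]
  have hinj : ∀ᵐ ω ∂P, Function.Injective (S ω) := by
    filter_upwards [ae_injective_of_indepFun hUmeas (fun l l' h => hindep.indepFun
      (i := .inr (.inr l)) (j := .inr (.inr l')) (by simpa using h)) hUcont] with ω hω
    exact fun l l' h => hω (congrArg (fun z : ℝ ×ₗ ℝ => (ofLex z).2) h)
  have hmeas : ∀ j r, MeasurableSet {ω | rank (S ω) j = r} :=
    sps_measurableSet_rank φ hWmeas (fun k i => (hA k i).1) hUmeas
  have hexch : ∀ j j' r, P {ω | rank (S ω) j = r} = P {ω | rank (S ω) j' = r} :=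
    fun j j' r => (sps_rank_exchangeable φ hWmeas hWsym hA hUmeas hUid hindep j r).trans
      (sps_rank_exchangeable φ hWmeas hWsym hA hUmeas hUid hindep j' r).symm
  simp_rw [← hS]
  refine ⟨fun j r hr => ?_, measure_le_ncard_zero_lt_succ hinj hmeas hexch hqm⟩
  have h := measure_rank_eq_inv_card hinj hmeas hexch j (r := r) (by simpa using hr)
  rw [Fintype.card_fin] at h
  exact h

/-- SPS exactness theorem. Measurements `Y i = ⟪φ i, p̊⟫ + W i` with independent noises
`W i`, each symmetric about 0; `A j i` are i.i.d. random signs and `U j` are i.i.d.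
atomless tie-breakers, all jointly independent of the noises. Ordering the statistics
`spsZ` (evaluated at the true parameter `p̊`) with uniform random tie-breaking — realized
lexicographically via the `U j` — each statistic occupies any given rank with probability
`1/m` (`m = mm + 1`), and consequently `P(p̊ ∈ Σ_q) = 1 - q/m`, where `Σ_q` is the set
of parameters `p` for which `Z 0 (p)` is not among the `q` largest of the `Z j (p)`. -/
theorem sps_exact_confidence {Ω : Type*} [MeasurableSpace Ω] (P : Measure Ω)
    [IsProbabilityMeasure P] (N np mm q : ℕ) (hq : 1 ≤ q) (hqm : q ≤ mm)
    (φ : Fin N → EuclideanSpace ℝ (Fin np)) (p₀ : EuclideanSpace ℝ (Fin np))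
    (W Y : Fin N → Ω → ℝ) (A : Fin mm → Fin N → Ω → ℝ) (U : Fin (mm + 1) → Ω → ℝ)
    (hWmeas : ∀ i, Measurable (W i))
    (hWsym : ∀ i, Measure.map (W i) P = Measure.map (fun ω => -W i ω) P)
    (hA : ∀ j i, IsRandSign P (A j i))
    (hUmeas : ∀ j, Measurable (U j))
    (hUid : ∀ j j', IdentDistrib (U j) (U j') P P)
    (hUcont : ∀ j, ∀ x : ℝ, P {ω | U j ω = x} = 0)
    (hindep : iIndepFun
      (Sum.elim W (Sum.elim (fun p : Fin mm × Fin N => A p.1 p.2) U) :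
        Fin N ⊕ ((Fin mm × Fin N) ⊕ Fin (mm + 1)) → Ω → ℝ) P)
    (hY : ∀ i ω, Y i ω = (inner ℝ (φ i) p₀ : ℝ) + W i ω) :
    (∀ j : Fin (mm + 1), ∀ r : ℕ, r < mm + 1 →
      P {ω | Set.ncard {l : Fin (mm + 1) |
          (toLex (spsZ φ Y A p₀ l ω, U l ω) : ℝ ×ₗ ℝ)
            < toLex (spsZ φ Y A p₀ j ω, U j ω)} = r}
        = ((mm + 1 : ℕ) : ℝ≥0∞)⁻¹) ∧
    P {ω | q ≤ Set.ncard {j : Fin mm |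
        (toLex (spsZ φ Y A p₀ 0 ω, U 0 ω) : ℝ ×ₗ ℝ)
          < toLex (spsZ φ Y A p₀ j.succ ω, U j.succ ω)}}
      = 1 - (q : ℝ≥0∞) / ((mm + 1 : ℕ) : ℝ≥0∞) :=
  sps_exact_confidence_general P N np mm q hqm φ p₀ W Y A U hWmeas hWsym hA hUmeas hUid hUcont
    hindep hY
end

section
/- Truncated SPS theorem: with measurements Y_i = φ_i^T p̊ + W_i (W_i independent, symmetric about 0) and arbitrary deterministic weights c_{k,i} ∈ [0,1], define S̃_0(p) = Σ_i c_{k,i} φ_i (Y_i - φ_i^T p) and S̃_j(p) = Σ_i c_{k,i} A_{j,i} φ_i (Y_i - φ_i^T p) with i.i.d. random signs A_{j,i} independent of the noise, Z̃_j(p) = ||S̃_j(p)||², and Σ̃_{q,k} = {p : at least q of Z̃_1(p),...,Z̃_{m-1}(p) exceed Z̃_0(p)} (uniform random tie-breaking). Then P(p̊ ∈ Σ̃_{q,k}) = 1 - q/m. -/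
open MeasureTheory ProbabilityTheory
open scoped ENNReal

/-- The truncated SPS statistics at a parameter `p`, with deterministic weights `c i`:
`spsZc … 0` is `‖Σ_i c_i (Y_i - ⟪φ_i, p⟫) φ_i‖²` and `spsZc … j.succ` is
`‖Σ_i c_i A_{j,i} (Y_i - ⟪φ_i, p⟫) φ_i‖²`. The paper's `m` is `mm + 1`. -/
noncomputable def spsZc {Ω : Type*} {N np mm : ℕ}
    (φ : Fin N → EuclideanSpace ℝ (Fin np)) (c : Fin N → ℝ) (Y : Fin N → Ω → ℝ)
    (A : Fin mm → Fin N → Ω → ℝ) (p : EuclideanSpace ℝ (Fin np)) :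
    Fin (mm + 1) → Ω → ℝ :=
  fun j => Fin.cases (motive := fun _ => Ω → ℝ)
    (fun ω => ‖∑ i, (c i * (Y i ω - (inner ℝ (φ i) p : ℝ))) • φ i‖ ^ 2)
    (fun j' ω => ‖∑ i, (c i * A j' i ω * (Y i ω - (inner ℝ (φ i) p : ℝ))) • φ i‖ ^ 2) j

/-!
The sample `(W, A, U)` has a product law. For each `k`, the map that multiplies the noises and
the other sign rows by the `k`-th row of signs, and swaps the tie-breakers `0` and `k + 1`,
preserves this law (the noises are symmetric, the signs are Rademacher, the tie-breakers are
identically distributed); since the signs square to one, it exchanges the reference statistic with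
the `k`-th perturbed one. So the rank of the reference statistic among the `m` tie-broken
statistics has the same law as the rank of any other. The atomless independent tie-breakers make
the `m` values almost surely distinct, so that rank is uniform on `{0, …, m - 1}`; and at least
`q` perturbed statistics exceed the reference one exactly when the rank is below `m - q`.
-/

namespace ProbabilityTheory

noncomputable def rademacher : Measure ℝ :=
  (2⁻¹ : ℝ≥0∞) • Measure.dirac 1 + (2⁻¹ : ℝ≥0∞) • Measure.dirac (-1)

instance : IsProbabilityMeasure rademacher :=
  ⟨by simp [rademacher, ENNReal.inv_two_add_inv_two]⟩

theorem map_neg_rademacher : rademacher.map Neg.neg = rademacher := by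
  simp [rademacher, Measure.map_add _ _ measurable_neg, Measure.map_smul,
    Measure.map_dirac' measurable_neg, add_comm]

theorem ae_rademacher : ∀ᵐ t ∂rademacher, t = 1 ∨ t = -1 := by
  have hm : MeasurableSet {t : ℝ | t = 1 ∨ t = -1} :=
    (measurableSet_singleton _).union (measurableSet_singleton _)
  rw [rademacher, ae_add_measure_iff]
  exact ⟨Measure.ae_smul_measure ((ae_dirac_iff hm).2 (by simp)) _,
    Measure.ae_smul_measure ((ae_dirac_iff hm).2 (by simp)) _⟩

end ProbabilityTheory

theorem IsRandSign.map_eq {Ω : Type*} [MeasurableSpace Ω] {P : Measure Ω}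
    [IsProbabilityMeasure P] {X : Ω → ℝ} (h : IsRandSign P X) : P.map X = rademacher := by
  obtain ⟨hX, h1, h2⟩ := h
  have : IsProbabilityMeasure (P.map X) := Measure.isProbabilityMeasure_map hX.aemeasurable
  have hsingle : ∀ a : ℝ, P.map X {a} = P {ω | X ω = a} := fun a =>
    Measure.map_apply hX (measurableSet_singleton a)
  have hpair : P.map X ({1} ∪ {-1}) = 1 := by
    rw [measure_union (by norm_num) (measurableSet_singleton _), hsingle, hsingle, h1, h2,
      ENNReal.add_halves]
  have hae : ∀ᵐ t ∂P.map X, t ∈ ({1} ∪ {-1} : Set ℝ) :=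
    (mem_ae_iff_prob_eq_one ((measurableSet_singleton _).union
      (measurableSet_singleton _))).2 hpair
  rw [← Measure.restrict_eq_self_of_ae_mem hae, Measure.restrict_union (by norm_num)
    (measurableSet_singleton _), Measure.restrict_singleton, Measure.restrict_singleton,
    hsingle, hsingle, h1, h2, one_div, rademacher]

namespace MeasureTheory

theorem measurePreserving_pi_comp_equiv {ι α : Type*} [Fintype ι] [MeasurableSpace α]
    (μ : ι → Measure α) [∀ i, SigmaFinite (μ i)] (e : ι ≃ ι) (g : ι → α → α)
    (hg : ∀ i, MeasurePreserving (g i) (μ (e i)) (μ i)) :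
    MeasurePreserving (fun x i => g i (x (e i))) (Measure.pi μ) (Measure.pi μ) := by
  have hperm : MeasurePreserving (fun (x : ι → α) i => x (e i)) (Measure.pi μ)
      (Measure.pi fun i => μ (e i)) := by
    convert measurePreserving_piCongrLeft (fun i => μ (e i)) e.symm using 1
    · ext x i
      simp [MeasurableEquiv.piCongrLeft, Equiv.piCongrLeft_apply]
    · simp
  exact (measurePreserving_pi _ μ hg).comp hperm

theorem measurePreserving_mul_of_map_neg {μ : Measure ℝ} (hμ : μ.map Neg.neg = μ) {s : ℝ}
    (hs : s = 1 ∨ s = -1) : MeasurePreserving (s * ·) μ μ := by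
  rcases hs with rfl | rfl
  · simp only [one_mul]
    exact MeasurePreserving.id μ
  · simpa using (⟨measurable_neg, hμ⟩ : MeasurePreserving Neg.neg μ μ)

theorem measurePreserving_of_eqOn_pieces {α E : Type*} [MeasurableSpace α] [Countable E]
    {μ : Measure α} {T : α → α} (hT : Measurable T) {C : E → Set α}
    (hC : ∀ e, MeasurableSet (C e)) (hdisj : Pairwise (Function.onFun Disjoint C))
    (hcov : ∀ᵐ x ∂μ, x ∈ ⋃ e, C e) {S : E → α → α} (hS : ∀ e, MeasurePreserving (S e) μ μ)
    (hSC : ∀ e, S e ⁻¹' C e = C e) (hTS : ∀ e, Set.EqOn T (S e) (C e)) :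
    MeasurePreserving T μ μ := by
  have hsplit : ∀ B, MeasurableSet B → μ B = ∑' e, μ (B ∩ C e) := fun B hB => by
    rw [← measure_iUnion (fun e e' he => (hdisj he).mono Set.inter_subset_right
      Set.inter_subset_right) fun e => hB.inter (hC e), ← Set.inter_iUnion,
      measure_inter_conull (s := B) (t := ⋃ e, C e) hcov]
  refine ⟨hT, Measure.ext fun B hB => ?_⟩
  rw [Measure.map_apply hT hB, hsplit _ (hT hB), hsplit B hB]
  refine tsum_congr fun e => ?_
  rw [Set.inter_comm, (hTS e).inter_preimage_eq, ← hSC e, ← Set.preimage_inter, hSC e,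
    Set.inter_comm, (hS e).measure_preimage (hB.inter (hC e)).nullMeasurableSet]

theorem Measure.prod_diagonal_eq_zero {α : Type*} [MeasurableSpace α] [MeasurableEq α]
    (μ ν : Measure α) [SFinite ν] [NullSingletonClass ν] : (μ.prod ν) (Set.diagonal α) = 0 := by
  rw [Measure.prod_apply measurableSet_diagonal]
  simp [Set.preimage, Set.diagonal]

theorem Measure.pi_eval_eq_eval_eq_zero {ι α : Type*} [Fintype ι] [MeasurableSpace α]
    [MeasurableEq α] (μ : ι → Measure α) [∀ i, IsProbabilityMeasure (μ i)] {i j : ι}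
    (hij : i ≠ j) [NullSingletonClass (μ j)] : Measure.pi μ {x | x i = x j} = 0 := by
  have hind : IndepFun (fun x : ι → α => x i) (fun x => x j) (Measure.pi μ) :=
    (iIndepFun_pi (X := fun _ => id) fun _ => aemeasurable_id).indepFun hij
  rw [indepFun_iff_map_prod_eq_prod_map_map (measurable_pi_apply i).aemeasurable
    (measurable_pi_apply j).aemeasurable] at hind
  have hdiag := congrArg (· (Set.diagonal α)) hind
  simp only [(measurePreserving_eval μ _).map_eq] at hdiag
  rwa [Measure.map_apply ((measurable_pi_apply i).prodMk (measurable_pi_apply j))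
    measurableSet_diagonal, Measure.prod_diagonal_eq_zero] at hdiag

end MeasureTheory

namespace TruncatedSPS

open Finset

section Rank

variable {ι L : Type*} [Fintype ι] [LinearOrder L]

def rank (v : ι → L) (k : ι) : ℕ := #{j | v j < v k}

theorem rank_comp_equiv (v : ι → L) (σ : ι ≃ ι) (k : ι) : rank (v ∘ σ) k = rank v (σ k) :=
  card_equiv σ (by simp)

theorem rank_lt_card (v : ι → L) (k : ι) : rank v k < Fintype.card ι :=
  card_lt_univ_of_notMem (x := k) (by simp)

theorem rank_lt_rank {v : ι → L} {j k : ι} (h : v j < v k) : rank v j < rank v k := by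
  refine card_lt_card (ssubset_iff_of_subset (fun i hi => ?_) |>.2 ⟨j, by simpa, by simp⟩)
  simp only [mem_filter, mem_univ, true_and] at hi ⊢
  exact hi.trans h

theorem rank_injective {v : ι → L} (hv : Function.Injective v) : Function.Injective (rank v) := by
  intro j k hjk
  rcases lt_trichotomy (v j) (v k) with h | h | h
  · exact absurd hjk (rank_lt_rank h).ne
  · exact hv h
  · exact absurd hjk (rank_lt_rank h).ne'

theorem card_filter_rank_eq {v : ι → L} (hv : Function.Injective v) {r : ℕ}
    (hr : r < Fintype.card ι) : #{k | rank v k = r} = 1 := by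
  classical
  have himage : univ.image (rank v) = range (Fintype.card ι) :=
    eq_of_subset_of_card_le (fun _ h => by
      obtain ⟨k, -, rfl⟩ := mem_image.1 h; exact mem_range.2 (rank_lt_card v k))
      (by rw [card_range, card_image_of_injective _ (rank_injective hv), card_univ])
  obtain ⟨k, -, hk⟩ := mem_image.1 (himage ▸ mem_range.2 hr)
  exact card_eq_one.2 ⟨k, by ext j; simpa [← hk] using (rank_injective hv).eq_iff⟩

theorem card_filter_lt_add_rank {v : ι → L} (hv : Function.Injective v) (k : ι) :
    #{j | v k < v j} + rank v k + 1 = Fintype.card ι := by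
  classical
  have hle : #{j | v j ≤ v k} = rank v k + 1 := by
    have : univ.filter (fun j => v j ≤ v k) = insert k (univ.filter fun j => v j < v k) := by
      ext j; simp [le_iff_lt_or_eq, hv.eq_iff, or_comm]
    rw [this, card_insert_of_notMem (by simp), rank]
  rw [add_assoc, ← hle, ← card_univ]
  simpa using card_filter_add_card_filter_not (s := univ) (fun j => v k < v j)

variable {α : Type*} [MeasurableSpace α] {μ : Measure α} {V : α → ι → L}

theorem measurable_rank (hV : ∀ j k, MeasurableSet {x | V x j < V x k}) (k : ι) :
    Measurable fun x => rank (V x) k := by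
  simp only [rank, card_filter]
  exact Finset.measurable_sum _ fun j _ => Measurable.ite (hV j k) measurable_const measurable_const

theorem measurableSet_rank_eq (hV : ∀ j k, MeasurableSet {x | V x j < V x k}) (k : ι) (r : ℕ) :
    MeasurableSet {x | rank (V x) k = r} :=
  measurable_rank hV k (measurableSet_singleton r)

theorem measure_rank_comp_equiv {T : α → α} (hT : MeasurePreserving T μ μ) {σ : ι ≃ ι}
    (hTV : ∀ᵐ x ∂μ, V (T x) = V x ∘ σ) (hV : ∀ j k, MeasurableSet {x | V x j < V x k})
    (k : ι) (r : ℕ) : μ {x | rank (V x) (σ k) = r} = μ {x | rank (V x) k = r} := by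
  have hpre : {x | rank (V x) (σ k) = r} =ᵐ[μ] T ⁻¹' {x | rank (V x) k = r} := by
    filter_upwards [hTV] with x hx
    change (rank (V x) (σ k) = r) = (rank (V (T x)) k = r)
    rw [hx, rank_comp_equiv]
  rw [measure_congr hpre, hT.measure_preimage (measurableSet_rank_eq hV k r).nullMeasurableSet]

theorem sum_measure_rank_eq_one [IsProbabilityMeasure μ]
    (hV : ∀ j k, MeasurableSet {x | V x j < V x k}) (hinj : ∀ᵐ x ∂μ, Function.Injective (V x))
    {r : ℕ} (hr : r < Fintype.card ι) : ∑ k, μ {x | rank (V x) k = r} = 1 := by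
  calc ∑ k, μ {x | rank (V x) k = r}
      = ∑ k, ∫⁻ x, {x | rank (V x) k = r}.indicator 1 x ∂μ := by
        simp only [lintegral_indicator_one (measurableSet_rank_eq hV _ r)]
    _ = ∫⁻ x, ∑ k, {x | rank (V x) k = r}.indicator 1 x ∂μ :=
        (lintegral_finsetSum _ fun k _ =>
          measurable_one.indicator (measurableSet_rank_eq hV k r)).symm
    _ = ∫⁻ _, 1 ∂μ := lintegral_congr_ae <| hinj.mono fun x hx => by
        simp [Set.indicator_apply, Finset.sum_boole, card_filter_rank_eq hx hr]
    _ = 1 := by simp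

theorem measure_rank_eq_inv_card [IsProbabilityMeasure μ]
    (hV : ∀ j k, MeasurableSet {x | V x j < V x k}) (hinj : ∀ᵐ x ∂μ, Function.Injective (V x))
    {k₀ : ι} {r : ℕ} (hexch : ∀ k, μ {x | rank (V x) k = r} = μ {x | rank (V x) k₀ = r})
    (hr : r < Fintype.card ι) : μ {x | rank (V x) k₀ = r} = (Fintype.card ι : ℝ≥0∞)⁻¹ := by
  have h := sum_measure_rank_eq_one hV hinj hr
  simp only [hexch, sum_const, card_univ, nsmul_eq_mul] at h
  exact ENNReal.eq_inv_of_mul_eq_one_left (by rwa [mul_comm])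

theorem measure_rank_lt [IsProbabilityMeasure μ]
    (hV : ∀ j k, MeasurableSet {x | V x j < V x k}) (hinj : ∀ᵐ x ∂μ, Function.Injective (V x))
    {k₀ : ι} (hexch : ∀ k r, μ {x | rank (V x) k = r} = μ {x | rank (V x) k₀ = r})
    {s : ℕ} (hs : s ≤ Fintype.card ι) :
    μ {x | rank (V x) k₀ < s} = s * (Fintype.card ι : ℝ≥0∞)⁻¹ := by
  have hunion : {x | rank (V x) k₀ < s} = ⋃ r ∈ range s, {x | rank (V x) k₀ = r} := by
    ext x; simp
  rw [hunion, measure_biUnion_finset (fun r _ r' _ hrr' =>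
      Set.disjoint_left.2 fun x h h' => hrr' (h.symm.trans h'))
    (fun r _ => measurableSet_rank_eq hV k₀ r),
    sum_congr rfl fun r hr => measure_rank_eq_inv_card hV hinj (hexch · r)
      ((mem_range.1 hr).trans_le hs)]
  simp

end Rank

abbrev Index (N mm : ℕ) := Fin N ⊕ ((Fin mm × Fin N) ⊕ Fin (mm + 1))

variable {N np mm : ℕ}

def noiseIdx (i : Fin N) : Index N mm := .inl i
def signIdx (j : Fin mm) (i : Fin N) : Index N mm := .inr (.inl (j, i))
def tieIdx (j : Fin (mm + 1)) : Index N mm := .inr (.inr j)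

def signWeight (x : Index N mm → ℝ) (j : Fin (mm + 1)) (i : Fin N) : ℝ :=
  Fin.cases 1 (fun j' => x (signIdx j' i)) j

noncomputable def stat (φ : Fin N → EuclideanSpace ℝ (Fin np)) (c : Fin N → ℝ)
    (x : Index N mm → ℝ) (j : Fin (mm + 1)) : ℝ :=
  ‖∑ i, (c i * signWeight x j i * x (noiseIdx i)) • φ i‖ ^ 2

noncomputable def taggedStat (φ : Fin N → EuclideanSpace ℝ (Fin np)) (c : Fin N → ℝ)
    (x : Index N mm → ℝ) (j : Fin (mm + 1)) : ℝ ×ₗ ℝ :=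
  toLex (stat φ c x j, x (tieIdx j))

noncomputable def exceedCount (φ : Fin N → EuclideanSpace ℝ (Fin np)) (c : Fin N → ℝ)
    (x : Index N mm → ℝ) : ℕ :=
  #{j : Fin mm | taggedStat φ c x 0 < taggedStat φ c x j.succ}

def tieSwap (k : Fin mm) : Index N mm ≃ Index N mm :=
  Equiv.sumCongr (Equiv.refl _) (Equiv.sumCongr (Equiv.refl _) (Equiv.swap 0 k.succ))

def flipFactor (k : Fin mm) (s : Fin N → ℝ) : Index N mm → ℝ :=
  Sum.elim s (Sum.elim (fun p => if p.1 = k then 1 else s p.2) fun _ => 1)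

def signFlip (k : Fin mm) (s : Fin N → ℝ) (x : Index N mm → ℝ) : Index N mm → ℝ :=
  fun idx => flipFactor k s idx * x (tieSwap k idx)

def exchange (k : Fin mm) (x : Index N mm → ℝ) : Index N mm → ℝ :=
  signFlip k (fun i => x (signIdx k i)) x

section signFlip

variable (k : Fin mm) (s : Fin N → ℝ) (x : Index N mm → ℝ)

@[simp] theorem signFlip_noiseIdx (i : Fin N) :
    signFlip k s x (noiseIdx i) = s i * x (noiseIdx i) := rfl

@[simp] theorem signFlip_signIdx (j : Fin mm) (i : Fin N) :
    signFlip k s x (signIdx j i) = (if j = k then 1 else s i) * x (signIdx j i) := rfl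

@[simp] theorem signFlip_tieIdx (j : Fin (mm + 1)) :
    signFlip k s x (tieIdx j) = x (tieIdx (Equiv.swap 0 k.succ j)) := by
  simp only [signFlip, flipFactor, tieSwap, tieIdx, Sum.elim_inr, Equiv.sumCongr_apply,
    Sum.map_inr, one_mul]

end signFlip

theorem signWeight_mul_noise_exchange (k : Fin mm) (x : Index N mm → ℝ) (j : Fin (mm + 1))
    (i : Fin N) (hx : x (signIdx k i) = 1 ∨ x (signIdx k i) = -1) :
    signWeight (exchange k x) j i * exchange k x (noiseIdx i)
      = signWeight x (Equiv.swap 0 k.succ j) i * x (noiseIdx i) := by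
  have hsq : x (signIdx k i) * x (signIdx k i) = 1 := by rcases hx with h | h <;> simp [h]
  induction j using Fin.cases with
  | zero => simp [signWeight, exchange]
  | succ j =>
    by_cases hjk : j = k
    · subst hjk
      simp only [signWeight, exchange, signFlip_signIdx, signFlip_noiseIdx, Fin.cases_succ,
        Fin.cases_zero, Equiv.swap_apply_right, if_true, one_mul]
      linear_combination x (noiseIdx i) * hsq
    · rw [Equiv.swap_apply_of_ne_of_ne (Fin.succ_ne_zero j)
        (fun h => hjk (Fin.succ_injective _ h))]
      simp only [signWeight, exchange, signFlip_signIdx, signFlip_noiseIdx, Fin.cases_succ, hjk,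
        if_false]
      linear_combination x (signIdx j i) * x (noiseIdx i) * hsq

theorem taggedStat_exchange (φ : Fin N → EuclideanSpace ℝ (Fin np)) (c : Fin N → ℝ)
    (k : Fin mm) (x : Index N mm → ℝ) (hx : ∀ i, x (signIdx k i) = 1 ∨ x (signIdx k i) = -1) :
    taggedStat φ c (exchange k x) = taggedStat φ c x ∘ Equiv.swap 0 k.succ := by
  funext j
  simp only [taggedStat, stat, Function.comp_apply, mul_assoc,
    signWeight_mul_noise_exchange k x j _ (hx _)]
  simp [exchange]

theorem measurable_exchange (k : Fin mm) : Measurable (exchange (N := N) k) := by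
  refine measurable_pi_lambda _ fun idx => ?_
  rcases idx with i | ⟨⟨j, i⟩ | j⟩
  · change Measurable fun x => exchange k x (noiseIdx i)
    simp only [exchange, signFlip_noiseIdx]
    fun_prop
  · change Measurable fun x => exchange k x (signIdx j i)
    simp only [exchange, signFlip_signIdx]
    split_ifs <;> fun_prop
  · change Measurable fun x => exchange k x (tieIdx j)
    simp only [exchange, signFlip_tieIdx]
    fun_prop

theorem measurable_stat (φ : Fin N → EuclideanSpace ℝ (Fin np)) (c : Fin N → ℝ)
    (j : Fin (mm + 1)) : Measurable fun x => stat φ c x j := by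
  induction j using Fin.cases with
  | zero => simp only [stat, signWeight, Fin.cases_zero]; fun_prop
  | succ j => simp only [stat, signWeight, Fin.cases_succ]; fun_prop

theorem measurableSet_taggedStat_lt (φ : Fin N → EuclideanSpace ℝ (Fin np)) (c : Fin N → ℝ)
    (j k : Fin (mm + 1)) : MeasurableSet {x | taggedStat φ c x j < taggedStat φ c x k} := by
  simp only [taggedStat, Prod.Lex.toLex_lt_toLex]
  exact (measurableSet_lt (measurable_stat φ c j) (measurable_stat φ c k)).union
    ((measurableSet_eq_fun (measurable_stat φ c j) (measurable_stat φ c k)).inter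
      (measurableSet_lt (measurable_pi_apply _) (measurable_pi_apply _)))

theorem measurableSet_le_exceedCount (φ : Fin N → EuclideanSpace ℝ (Fin np)) (c : Fin N → ℝ)
    (q : ℕ) : MeasurableSet {x : Index N mm → ℝ | q ≤ exceedCount φ c x} := by
  simp only [exceedCount, card_filter]
  exact measurableSet_le measurable_const <| Finset.measurable_sum _ fun j _ =>
    Measurable.ite (measurableSet_taggedStat_lt φ c 0 j.succ) measurable_const measurable_const

theorem exceedCount_add_rank {φ : Fin N → EuclideanSpace ℝ (Fin np)} {c : Fin N → ℝ}
    {x : Index N mm → ℝ} (hx : Function.Injective (taggedStat φ c x)) :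
    exceedCount φ c x + rank (taggedStat φ c x) 0 = mm := by
  have h := card_filter_lt_add_rank hx 0
  rw [Fin.card_filter_univ_succ, if_neg (lt_irrefl _), Fintype.card_fin] at h
  rw [exceedCount]
  omega

section Law

variable (μ : Index N mm → Measure ℝ) [∀ idx, IsProbabilityMeasure (μ idx)]

theorem measurePreserving_signFlip (hW : ∀ i, (μ (noiseIdx i)).map Neg.neg = μ (noiseIdx i))
    (hA : ∀ j i, μ (signIdx j i) = rademacher) {τ : Measure ℝ} (hU : ∀ j, μ (tieIdx j) = τ)
    (k : Fin mm) {s : Fin N → ℝ} (hs : ∀ i, s i = 1 ∨ s i = -1) :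
    MeasurePreserving (signFlip k s) (Measure.pi μ) (Measure.pi μ) := by
  refine measurePreserving_pi_comp_equiv μ (tieSwap k) (fun idx => (flipFactor k s idx * ·)) ?_
  rintro (i | ⟨⟨j, i⟩ | j⟩)
  · exact measurePreserving_mul_of_map_neg (hW i) (hs i)
  · refine measurePreserving_mul_of_map_neg (μ := μ (signIdx j i))
      (by rw [hA]; exact map_neg_rademacher) ?_
    by_cases hjk : j = k <;> simp [flipFactor, hjk, hs i]
  · change MeasurePreserving (1 * ·) (μ (tieIdx (Equiv.swap 0 k.succ j))) (μ (tieIdx j))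
    simp only [one_mul, hU]
    exact MeasurePreserving.id τ

theorem ae_signIdx_eq_one_or (hA : ∀ j i, μ (signIdx j i) = rademacher) (k : Fin mm) :
    ∀ᵐ x ∂Measure.pi μ, ∀ i, x (signIdx k i) = 1 ∨ x (signIdx k i) = -1 :=
  ae_all_iff.2 fun i => (Measure.quasiMeasurePreserving_eval μ _).ae (hA k i ▸ ae_rademacher)

/-- On each piece where the `k`-th row of signs equals a fixed pattern `ε`, `exchange k` is the
coordinatewise map `signFlip k ε`. -/
theorem measurePreserving_exchange (hW : ∀ i, (μ (noiseIdx i)).map Neg.neg = μ (noiseIdx i))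
    (hA : ∀ j i, μ (signIdx j i) = rademacher) {τ : Measure ℝ} (hU : ∀ j, μ (tieIdx j) = τ)
    (k : Fin mm) : MeasurePreserving (exchange k) (Measure.pi μ) (Measure.pi μ) := by
  let C : (Fin N → ℤˣ) → Set (Index N mm → ℝ) := fun ε => {x | ∀ i, x (signIdx k i) = ε i}
  refine measurePreserving_of_eqOn_pieces (measurable_exchange k) (C := C)
    (S := fun ε => signFlip k fun i => ((ε i : ℤ) : ℝ)) (fun ε => ?_)
    (fun ε ε' hne => ?_) ?_ (fun ε => measurePreserving_signFlip μ hW hA hU k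
      fun i => by rcases Int.units_eq_one_or (ε i) with h | h <;> simp [h]) (fun ε => ?_) ?_
  · simp only [C, Set.ofPred_forall]
    exact MeasurableSet.iInter fun i =>
      measurableSet_eq_fun (measurable_pi_apply _) measurable_const
  · obtain ⟨i, hi⟩ := Function.ne_iff.1 hne
    exact Set.disjoint_left.2 fun x hx hx' =>
      hi (Units.ext (by exact_mod_cast (hx i).symm.trans (hx' i)))
  · filter_upwards [ae_signIdx_eq_one_or μ hA k] with x hx
    refine Set.mem_iUnion.2 ⟨fun i => if x (signIdx k i) = 1 then 1 else -1, fun i => ?_⟩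
    rcases hx i with h | h <;> norm_num [h]
  · ext x
    simp [C]
  · intro ε x hx
    simp only [exchange, C, Set.mem_ofPred_eq] at hx ⊢
    simp only [hx]

theorem ae_injective_taggedStat {τ : Measure ℝ} [NullSingletonClass τ]
    (hU : ∀ j, μ (tieIdx j) = τ) (φ : Fin N → EuclideanSpace ℝ (Fin np)) (c : Fin N → ℝ) :
    ∀ᵐ x ∂Measure.pi μ, Function.Injective (taggedStat φ c x) := by
  have hties : ∀ᵐ x ∂Measure.pi μ, ∀ j j', x (tieIdx j) = x (tieIdx j') → j = j' := by
    refine ae_all_iff.2 fun j => ae_all_iff.2 fun j' => ?_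
    by_cases h : j = j'
    · exact ae_of_all _ fun _ _ => h
    · have : NullSingletonClass (μ (tieIdx j')) := hU j' ▸ ‹_›
      have hne : (tieIdx j : Index N mm) ≠ tieIdx j' := by simpa [tieIdx] using h
      exact ae_iff.2 (measure_mono_null (fun x hx => (Classical.not_imp.1 hx).1)
        (Measure.pi_eval_eq_eval_eq_zero μ hne))
  filter_upwards [hties] with x hx j j' h
  exact hx j j' (congrArg (fun p => (ofLex p).2) h)

theorem pi_measure_le_exceedCount (hW : ∀ i, (μ (noiseIdx i)).map Neg.neg = μ (noiseIdx i))
    (hA : ∀ j i, μ (signIdx j i) = rademacher) {τ : Measure ℝ} [NullSingletonClass τ]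
    (hU : ∀ j, μ (tieIdx j) = τ) (φ : Fin N → EuclideanSpace ℝ (Fin np)) (c : Fin N → ℝ)
    (q : ℕ) : Measure.pi μ {x | q ≤ exceedCount φ c x} = 1 - q / ((mm + 1 : ℕ) : ℝ≥0∞) := by
  have hV := measurableSet_taggedStat_lt (mm := mm) φ c
  have hinj := ae_injective_taggedStat μ hU φ c
  have hexch : ∀ k r, Measure.pi μ {x | rank (taggedStat φ c x) k = r}
      = Measure.pi μ {x | rank (taggedStat φ c x) 0 = r} := by
    intro k r
    induction k using Fin.cases with
    | zero => rfl
    | succ k =>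
      simpa using measure_rank_comp_equiv (measurePreserving_exchange μ hW hA hU k)
        ((ae_signIdx_eq_one_or μ hA k).mono fun x hx => taggedStat_exchange φ c k x hx) hV 0 r
  have hevent : {x | q ≤ exceedCount φ c x}
      =ᵐ[Measure.pi μ] {x | rank (taggedStat φ c x) 0 < mm + 1 - q} := by
    filter_upwards [hinj] with x hx
    have := exceedCount_add_rank hx
    change (q ≤ exceedCount φ c x) = (rank (taggedStat φ c x) 0 < mm + 1 - q)
    exact propext (by omega)
  rw [measure_congr hevent, measure_rank_lt hV hinj hexch (by simp), Fintype.card_fin,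
    ENNReal.natCast_sub, ENNReal.sub_mul fun _ _ => by simp,
    ENNReal.mul_inv_cancel (by simp) (by simp), div_eq_mul_inv]

end Law

theorem spsZc_eq_stat {Ω : Type*} {φ : Fin N → EuclideanSpace ℝ (Fin np)} {c : Fin N → ℝ}
    {p₀ : EuclideanSpace ℝ (Fin np)} {W Y : Fin N → Ω → ℝ} {A : Fin mm → Fin N → Ω → ℝ}
    (U : Fin (mm + 1) → Ω → ℝ) (hY : ∀ i ω, Y i ω = (inner ℝ (φ i) p₀ : ℝ) + W i ω)
    (j : Fin (mm + 1)) (ω : Ω) :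
    spsZc φ c Y A p₀ j ω = stat φ c
      (fun idx => Sum.elim W (Sum.elim (fun p : Fin mm × Fin N => A p.1 p.2) U) idx ω) j := by
  induction j using Fin.cases with
  | zero => simp [spsZc, stat, signWeight, hY, noiseIdx]
  | succ j => simp [spsZc, stat, signWeight, hY, noiseIdx, signIdx]

theorem ncard_lt_spsZc_eq_exceedCount {Ω : Type*} {φ : Fin N → EuclideanSpace ℝ (Fin np)}
    {c : Fin N → ℝ} {p₀ : EuclideanSpace ℝ (Fin np)} {W Y : Fin N → Ω → ℝ}
    {A : Fin mm → Fin N → Ω → ℝ} (U : Fin (mm + 1) → Ω → ℝ)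
    (hY : ∀ i ω, Y i ω = (inner ℝ (φ i) p₀ : ℝ) + W i ω) (ω : Ω) :
    Set.ncard {j : Fin mm | (toLex (spsZc φ c Y A p₀ 0 ω, U 0 ω) : ℝ ×ₗ ℝ)
        < toLex (spsZc φ c Y A p₀ j.succ ω, U j.succ ω)}
      = exceedCount φ c
          (fun idx => Sum.elim W (Sum.elim (fun p : Fin mm × Fin N => A p.1 p.2) U) idx ω) := by
  simp only [spsZc_eq_stat U hY, Set.ncard_eq_toFinset_card', Set.toFinset_ofPred]
  rfl

end TruncatedSPS

theorem truncated_sps_confidence_general {Ω : Type*} [MeasurableSpace Ω] (P : Measure Ω)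
    [IsProbabilityMeasure P] (N np mm q : ℕ)
    (φ : Fin N → EuclideanSpace ℝ (Fin np)) (p₀ : EuclideanSpace ℝ (Fin np))
    (c : Fin N → ℝ)
    (W Y : Fin N → Ω → ℝ) (A : Fin mm → Fin N → Ω → ℝ) (U : Fin (mm + 1) → Ω → ℝ)
    (hWmeas : ∀ i, Measurable (W i))
    (hWsym : ∀ i, Measure.map (W i) P = Measure.map (fun ω => -W i ω) P)
    (hA : ∀ j i, IsRandSign P (A j i))
    (hUmeas : ∀ j, Measurable (U j))
    (hUid : ∀ j j', IdentDistrib (U j) (U j') P P)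
    (hUcont : ∀ j, ∀ x : ℝ, P {ω | U j ω = x} = 0)
    (hindep : iIndepFun
      (Sum.elim W (Sum.elim (fun p : Fin mm × Fin N => A p.1 p.2) U) :
        Fin N ⊕ ((Fin mm × Fin N) ⊕ Fin (mm + 1)) → Ω → ℝ) P)
    (hY : ∀ i ω, Y i ω = (inner ℝ (φ i) p₀ : ℝ) + W i ω) :
    P {ω | q ≤ Set.ncard {j : Fin mm |
        (toLex (spsZc φ c Y A p₀ 0 ω, U 0 ω) : ℝ ×ₗ ℝ)
          < toLex (spsZc φ c Y A p₀ j.succ ω, U j.succ ω)}}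
      = 1 - (q : ℝ≥0∞) / ((mm + 1 : ℕ) : ℝ≥0∞) := by
  simp only [TruncatedSPS.ncard_lt_spsZc_eq_exceedCount U hY]
  set X : TruncatedSPS.Index N mm → Ω → ℝ := Sum.elim W (Sum.elim (fun p => A p.1 p.2) U)
  have hX : ∀ idx, Measurable (X idx) := by
    rintro (i | ⟨⟨j, i⟩ | j⟩)
    exacts [hWmeas i, (hA j i).1, hUmeas j]
  have : ∀ idx, IsProbabilityMeasure (P.map (X idx)) := fun idx =>
    Measure.isProbabilityMeasure_map (hX idx).aemeasurable
  have : NullSingletonClass (P.map (U 0)) := ⟨fun a => by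
    rw [Measure.map_apply (hUmeas 0) (measurableSet_singleton a)]
    exact hUcont 0 a⟩
  rw [← Set.preimage_ofPred_eq (f := fun ω idx => X idx ω)
      (p := (q ≤ TruncatedSPS.exceedCount φ c ·)),
    ← Measure.map_apply (measurable_pi_lambda _ hX)
      (TruncatedSPS.measurableSet_le_exceedCount φ c q),
    hindep.map_fun_eq_pi_map fun idx => (hX idx).aemeasurable]
  refine TruncatedSPS.pi_measure_le_exceedCount _ (fun i => ?_) (fun j i => (hA j i).map_eq)
    (fun j => (hUid j 0).map_eq) φ c q
  change (P.map (W i)).map Neg.neg = P.map (W i)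
  rw [Measure.map_map measurable_neg (hWmeas i)]
  exact (hWsym i).symm

/-- Truncated SPS theorem. Measurements `Y i = ⟪φ i, p̊⟫ + W i` with independent noises,
each symmetric about 0, arbitrary deterministic weights `c i ∈ [0,1]`, i.i.d. random
signs `A j i` and i.i.d. atomless tie-breakers `U j`, all jointly independent of the
noises. Then the confidence region `Σ̃_{q,k}` (the set of `p` such that at least `q` of
the perturbed statistics exceed the unperturbed one, with uniform random tie-breaking
realized lexicographically via the `U j`) contains the true parameter `p̊` with
probability exactly `1 - q/m`, where `m = mm + 1`. -/
theorem truncated_sps_confidence {Ω : Type*} [MeasurableSpace Ω] (P : Measure Ω)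
    [IsProbabilityMeasure P] (N np mm q : ℕ) (hq : 1 ≤ q) (hqm : q ≤ mm)
    (φ : Fin N → EuclideanSpace ℝ (Fin np)) (p₀ : EuclideanSpace ℝ (Fin np))
    (c : Fin N → ℝ) (hc : ∀ i, c i ∈ Set.Icc (0 : ℝ) 1)
    (W Y : Fin N → Ω → ℝ) (A : Fin mm → Fin N → Ω → ℝ) (U : Fin (mm + 1) → Ω → ℝ)
    (hWmeas : ∀ i, Measurable (W i))
    (hWsym : ∀ i, Measure.map (W i) P = Measure.map (fun ω => -W i ω) P)
    (hA : ∀ j i, IsRandSign P (A j i))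
    (hUmeas : ∀ j, Measurable (U j))
    (hUid : ∀ j j', IdentDistrib (U j) (U j') P P)
    (hUcont : ∀ j, ∀ x : ℝ, P {ω | U j ω = x} = 0)
    (hindep : iIndepFun
      (Sum.elim W (Sum.elim (fun p : Fin mm × Fin N => A p.1 p.2) U) :
        Fin N ⊕ ((Fin mm × Fin N) ⊕ Fin (mm + 1)) → Ω → ℝ) P)
    (hY : ∀ i ω, Y i ω = (inner ℝ (φ i) p₀ : ℝ) + W i ω) :
    P {ω | q ≤ Set.ncard {j : Fin mm |
        (toLex (spsZc φ c Y A p₀ 0 ω, U 0 ω) : ℝ ×ₗ ℝ)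
          < toLex (spsZc φ c Y A p₀ j.succ ω, U j.succ ω)}}
      = 1 - (q : ℝ≥0∞) / ((mm + 1 : ℕ) : ℝ≥0∞) :=
  truncated_sps_confidence_general P N np mm q φ p₀ c W Y A U hWmeas hWsym hA hUmeas hUid hUcont
    hindep hY
end
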